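/- arXiv:2602.21802 — 2 statements merged into one kernel-verified Lean document; each statement's English description precedes it below -/
import Mathlib

section
/- Let n ≥ 1 and let V = {1, 2, …, n+3}. Define the family ℱ of subsets of V consisting of: V \ {2, n+3}, V \ {1, n+3}, and for each i with 3 ≤ i ≤ n+2 the two sets V \ {2, i} and V \ {1, i}. Call a subset I ⊆ V a primitive collection (with respect to ℱ) if I is not contained in any member of ℱ but every proper subset of I is contained in some member of ℱ. Then the primitive collections are exactly the two sets {1, 2} and {3, 4, …, n+3}. -/
/-- The primitive collections of the simplicial fan `Σ` subdividing the face fan of the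
polytope `Q` are exactly `{1, 2}` and its complement `{3, …, n+3}`. -/
theorem stmt_0 (n : ℕ) (hn : 1 ≤ n) (V : Finset ℕ) (ℱ : Finset (Finset ℕ))
    (hV : V = Finset.Icc 1 (n + 3))
    (hℱ : ℱ = {V \ {2, n + 3}, V \ {1, n + 3}} ∪
        (Finset.Icc 3 (n + 2)).image (fun i => V \ {2, i}) ∪
        (Finset.Icc 3 (n + 2)).image (fun i => V \ {1, i})) :
    ∀ I ⊆ V,
      ((¬ ∃ F ∈ ℱ, I ⊆ F) ∧ ∀ J ⊂ I, ∃ F ∈ ℱ, J ⊆ F) ↔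
        (I = {1, 2} ∨ I = Finset.Icc 3 (n + 3)) := by
  have hmem : ∀ F, F ∈ ℱ ↔
      ∃ a b, (a = 1 ∨ a = 2) ∧ 3 ≤ b ∧ b ≤ n + 3 ∧ F = V \ {a, b} := by
    intro F
    subst hℱ
    simp only [Finset.mem_union, Finset.mem_insert, Finset.mem_singleton,
      Finset.mem_image, Finset.mem_Icc]
    constructor
    · rintro (((rfl | rfl) | ⟨i, hi, rfl⟩) | ⟨i, hi, rfl⟩)
      · exact ⟨2, n + 3, Or.inr rfl, by omega, by omega, rfl⟩
      · exact ⟨1, n + 3, Or.inl rfl, by omega, by omega, rfl⟩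
      · exact ⟨2, i, Or.inr rfl, by omega, by omega, rfl⟩
      · exact ⟨1, i, Or.inl rfl, by omega, by omega, rfl⟩
    · rintro ⟨a, b, (rfl | rfl), hb3, hbn, rfl⟩
      · by_cases hb : b = n + 3
        · subst hb; exact Or.inl (Or.inl (Or.inr rfl))
        · exact Or.inr ⟨b, ⟨hb3, by omega⟩, rfl⟩
      · by_cases hb : b = n + 3
        · subst hb; exact Or.inl (Or.inl (Or.inl rfl))
        · exact Or.inl (Or.inr ⟨b, ⟨hb3, by omega⟩, rfl⟩)
  have hcov : ∀ J : Finset ℕ, (∃ F ∈ ℱ, J ⊆ F) ↔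
      J ⊆ V ∧ (1 ∉ J ∨ 2 ∉ J) ∧ ∃ b, 3 ≤ b ∧ b ≤ n + 3 ∧ b ∉ J := by
    intro J
    constructor
    · rintro ⟨F, hF, hJF⟩
      rw [hmem] at hF
      obtain ⟨a, b, ha, hb3, hbn, rfl⟩ := hF
      rw [Finset.subset_sdiff] at hJF
      obtain ⟨hJV, hdisj⟩ := hJF
      rw [Finset.disjoint_insert_right, Finset.disjoint_singleton_right] at hdisj
      refine ⟨hJV, ?_, b, hb3, hbn, hdisj.2⟩
      rcases ha with rfl | rfl
      · exact Or.inl hdisj.1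
      · exact Or.inr hdisj.1
    · rintro ⟨hJV, h12, b, hb3, hbn, hbJ⟩
      rcases h12 with h1 | h2
      · refine ⟨V \ {1, b}, (hmem _).2 ⟨1, b, Or.inl rfl, hb3, hbn, rfl⟩, ?_⟩
        rw [Finset.subset_sdiff, Finset.disjoint_insert_right,
          Finset.disjoint_singleton_right]
        exact ⟨hJV, h1, hbJ⟩
      · refine ⟨V \ {2, b}, (hmem _).2 ⟨2, b, Or.inr rfl, hb3, hbn, rfl⟩, ?_⟩
        rw [Finset.subset_sdiff, Finset.disjoint_insert_right,
          Finset.disjoint_singleton_right]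
        exact ⟨hJV, h2, hbJ⟩
  intro I hIV
  constructor
  · rintro ⟨hnc, hmin⟩
    rw [hcov] at hnc
    push_neg at hnc
    have h' := hnc hIV
    by_cases hc : 1 ∈ I ∧ 2 ∈ I
    · obtain ⟨h1, h2⟩ := hc
      -- 1 ∈ I and 2 ∈ I : show I = {1,2}
      left
      by_contra hne
      have h12I : ({1, 2} : Finset ℕ) ⊆ I := by
        intro x hx
        simp only [Finset.mem_insert, Finset.mem_singleton] at hx
        rcases hx with rfl | rfl <;> assumption
      have hss : ({1, 2} : Finset ℕ) ⊂ I :=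
        ⟨h12I, fun h => hne (Finset.Subset.antisymm h h12I)⟩
      have := (hcov _).1 (hmin _ hss)
      rcases this.2.1 with h | h <;> simp at h
    · -- Icc 3 (n+3) ⊆ I
      have hB := h' (by tauto)
      right
      have hBI : Finset.Icc 3 (n + 3) ⊆ I := by
        intro b hb
        rw [Finset.mem_Icc] at hb
        exact hB b hb.1 hb.2
        
      by_contra hne
      have hss : Finset.Icc 3 (n + 3) ⊂ I :=
        ⟨hBI, fun h => hne (Finset.Subset.antisymm h hBI)⟩
      have := (hcov _).1 (hmin _ hss)
      obtain ⟨b, hb3, hbn, hbJ⟩ := this.2.2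
      exact hbJ (Finset.mem_Icc.2 ⟨hb3, hbn⟩)
  · rintro (rfl | rfl)
    · constructor
      · rw [hcov]
        rintro ⟨-, h12, -⟩
        rcases h12 with h | h <;> simp at h
      · intro J hJ
        rw [hcov]
        refine ⟨hJ.1.trans hIV, ?_, 3, le_refl 3, by omega, ?_⟩
        · by_contra h
          push_neg at h
          exact hJ.2 (by
            intro x hx
            simp only [Finset.mem_insert, Finset.mem_singleton] at hx
            rcases hx with rfl | rfl
            · exact h.1
            · exact h.2)
        · intro h3
          have := hJ.1 h3
          simp at this
    · constructor
      · rw [hcov]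
        rintro ⟨-, -, b, hb3, hbn, hbJ⟩
        exact hbJ (Finset.mem_Icc.2 ⟨hb3, hbn⟩)
      · intro J hJ
        rw [hcov]
        obtain ⟨b, hbI, hbJ⟩ := Finset.exists_of_ssubset hJ
        rw [Finset.mem_Icc] at hbI
        refine ⟨hJ.1.trans hIV, Or.inl ?_, b, hbI.1, hbI.2, hbJ⟩
        intro h1
        have := hJ.1 h1
        rw [Finset.mem_Icc] at this
        omega
end

section
/- Let R be a commutative ring, S ⊆ R a multiplicative submonoid, Λ an associative unital R-algebra (not necessarily commutative), and set Λ_S := S⁻¹R ⊗_R Λ. Let d ∈ ℕ. If every left Λ-module admits a projective resolution of length at most d (i.e., an exact sequence 0 → P_d → ⋯ → P₀ → M → 0 with all Pᵢ projective left Λ-modules), then every left Λ_S-module admits a projective resolution of length at most d. -/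
set_option maxHeartbeats 1000000
set_option synthInstance.maxHeartbeats 400000

open CategoryTheory TensorProduct

/-- `M` admits a projective resolution `0 → P_d → ⋯ → P_0 → M → 0` of length at most `d`,
encoded as an exact complex of projective modules vanishing in degrees above `d`. -/
def HasProjResLE (Λ : Type) [Ring Λ] (d : ℕ) (M : Type) [AddCommGroup M] [Module Λ M] :
    Prop :=
  ∃ (P : ℕ → ModuleCat.{0} Λ) (f : ∀ i, P (i + 1) ⟶ P i) (ε : P 0 ⟶ ModuleCat.of Λ M),
    (∀ i, Module.Projective Λ (P i)) ∧
    Function.Surjective ε ∧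
    Function.Exact (f 0) ε ∧
    (∀ i, Function.Exact (f (i + 1)) (f i)) ∧
    (∀ i, d ≤ i → Subsingleton (P (i + 1)))

section Aux

attribute [local instance] RestrictScalars.moduleOrig

variable (R : Type) [CommRing R] (S : Submonoid R) (Λ : Type) [Ring Λ] [Algebra R Λ]

variable (M : Type) [AddCommGroup M] [Module Λ M]

abbrev LocMod : Type := Localization S ⊗[R] (RestrictScalars R Λ M)

/-- The action of `c : Λ` on `RestrictScalars R Λ M`, as an `R`-linear map. -/
def lamSmulHom (c : Λ) : RestrictScalars R Λ M →ₗ[R] RestrictScalars R Λ M where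
  toFun m := c • m
  map_add' := smul_add c
  map_smul' r m := by
    show c • ((algebraMap R Λ r) • m) = (algebraMap R Λ r) • (c • m)
    rw [← mul_smul, ← mul_smul, Algebra.commutes]

/-- The ring hom `Λ →+* End R (LocMod R S Λ M)` giving the `Λ`-action on the localized module. -/
noncomputable def lamHom : Λ →+* Module.End R (LocMod R S Λ M) where
  toFun c := LinearMap.lTensor (Localization S) (lamSmulHom R Λ M c)
  map_one' := by
    have : lamSmulHom R Λ M 1 = LinearMap.id := by ext m; exact one_smul Λ m
    show LinearMap.lTensor (Localization S) (lamSmulHom R Λ M 1) = LinearMap.id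
    rw [this, LinearMap.lTensor_id]
  map_mul' c c' := by
    have : lamSmulHom R Λ M (c * c') = (lamSmulHom R Λ M c).comp (lamSmulHom R Λ M c') := by
      ext m; exact mul_smul c c' m
    show LinearMap.lTensor (Localization S) (lamSmulHom R Λ M (c * c')) = _
    rw [this, LinearMap.lTensor_comp]; rfl
  map_zero' := by
    have : lamSmulHom R Λ M 0 = 0 := by ext m; exact zero_smul Λ m
    show LinearMap.lTensor (Localization S) (lamSmulHom R Λ M 0) = 0
    rw [this, LinearMap.lTensor_zero]
  map_add' c c' := by
    have : lamSmulHom R Λ M (c + c') = lamSmulHom R Λ M c + lamSmulHom R Λ M c' := by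
      ext m; exact add_smul c c' m
    show LinearMap.lTensor (Localization S) (lamSmulHom R Λ M (c + c')) = _
    rw [this, LinearMap.lTensor_add]

noncomputable instance lamModule : Module Λ (LocMod R S Λ M) := Module.compHom _ (lamHom R S Λ M)

lemma lam_smul_tmul (c : Λ) (t : Localization S) (m : RestrictScalars R Λ M) :
    c • (t ⊗ₜ[R] m : LocMod R S Λ M) = t ⊗ₜ[R] (c • m) := rfl

instance : SMulCommClass (Localization S) Λ (LocMod R S Λ M) where
  smul_comm a c x := by
    induction x using TensorProduct.induction_on with
    | zero => simp
    | tmul t m => rw [lam_smul_tmul, smul_tmul', smul_tmul', lam_smul_tmul]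
    | add x y hx hy =>
        rw [smul_add, smul_add, hx, hy, ← smul_add, ← smul_add]

instance : IsScalarTower R Λ (LocMod R S Λ M) where
  smul_assoc r c x := by
    induction x using TensorProduct.induction_on with
    | zero => simp
    | tmul t m =>
        have hm : (r • c) • m = r • (c • m) := by
          show (r • c) • m = (algebraMap R Λ r) • (c • m)
          rw [← mul_smul, Algebra.smul_def]
        conv_rhs => rw [lam_smul_tmul]
        rw [lam_smul_tmul, hm, tmul_smul]
    | add x y hx hy => rw [smul_add, hx, hy, smul_add, smul_add]

noncomputable instance bigModule : Module (Localization S ⊗[R] Λ) (LocMod R S Λ M) :=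
  TensorProduct.Algebra.module

lemma big_smul_def (c : Localization S ⊗[R] Λ) (x : LocMod R S Λ M) :
    c • x = TensorProduct.Algebra.moduleAux c x := rfl

lemma big_smul_tmul (a : Localization S) (b : Λ) (t : Localization S)
    (m : RestrictScalars R Λ M) :
    ((a ⊗ₜ[R] b : Localization S ⊗[R] Λ) • (t ⊗ₜ[R] m : LocMod R S Λ M))
      = (a * t) ⊗ₜ[R] (b • m) := by
  rw [big_smul_def, TensorProduct.Algebra.moduleAux_apply, lam_smul_tmul, smul_tmul',
    smul_eq_mul]

end Aux

section Aux2

attribute [local instance] RestrictScalars.moduleOrig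

variable (R : Type) [CommRing R] (S : Submonoid R) (Λ : Type) [Ring Λ] [Algebra R Λ]

/-- Additive maps commuting with pure-tensor scalars are `Localization S ⊗[R] Λ`-linear. -/
lemma big_map_smul {X Y : Type} [AddCommGroup X] [AddCommGroup Y]
    [Module (Localization S ⊗[R] Λ) X] [Module (Localization S ⊗[R] Λ) Y]
    (g : X → Y) (g0 : g 0 = 0) (gadd : ∀ x y, g (x + y) = g x + g y)
    (hg : ∀ (a : Localization S) (b : Λ) (x : X),
      g ((a ⊗ₜ[R] b : Localization S ⊗[R] Λ) • x) = (a ⊗ₜ[R] b : Localization S ⊗[R] Λ) • g x)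
    (c : Localization S ⊗[R] Λ) (x : X) : g (c • x) = c • g x := by
  induction c using TensorProduct.induction_on with
  | zero => exact (congrArg g (zero_smul (Localization S ⊗[R] Λ) x)).trans (g0.trans (zero_smul (Localization S ⊗[R] Λ) (g x)).symm)
  | tmul a b => exact hg a b x
  | add u v hu hv => rw [add_smul, add_smul, gadd, hu, hv]

variable {M M' M'' : Type} [AddCommGroup M] [Module Λ M] [AddCommGroup M'] [Module Λ M']
  [AddCommGroup M''] [Module Λ M'']

/-- A `Λ`-linear map, viewed as `R`-linear on restricted scalars. -/
def rsMap (g : M →ₗ[Λ] M') : RestrictScalars R Λ M →ₗ[R] RestrictScalars R Λ M' where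
  toFun m := g m
  map_add' := g.map_add
  map_smul' r m := by
    show g ((algebraMap R Λ r) • m) = (algebraMap R Λ r) • g m
    exact g.map_smul _ m

/-- Base change of a `Λ`-linear map to the localized modules. -/
noncomputable def locMap (g : M →ₗ[Λ] M') :
    LocMod R S Λ M →ₗ[Localization S ⊗[R] Λ] LocMod R S Λ M' where
  toFun := LinearMap.lTensor (Localization S) (rsMap R Λ g)
  map_add' := map_add _
  map_smul' c x := by
    refine big_map_smul R S Λ (LinearMap.lTensor (Localization S) (rsMap R Λ g))
      (LinearMap.map_zero _) (LinearMap.map_add _) (fun a b x => ?_) c x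
    induction x using TensorProduct.induction_on with
    | zero => rw [smul_zero, map_zero, smul_zero]
    | tmul t m =>
        show LinearMap.lTensor (Localization S) (rsMap R Λ g)
              ((a ⊗ₜ[R] b : Localization S ⊗[R] Λ) • t ⊗ₜ[R] m)
            = (a ⊗ₜ[R] b : Localization S ⊗[R] Λ) •
              LinearMap.lTensor (Localization S) (rsMap R Λ g) (t ⊗ₜ[R] m)
        rw [big_smul_tmul, LinearMap.lTensor_tmul, LinearMap.lTensor_tmul, big_smul_tmul]
        congr 1
        exact g.map_smul b m
    | add x y hx hy =>
        rw [smul_add, map_add, map_add, hx, hy, smul_add]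

lemma locMap_tmul (g : M →ₗ[Λ] M') (t : Localization S) (m : RestrictScalars R Λ M) :
    locMap R S Λ g (t ⊗ₜ[R] m) = t ⊗ₜ[R] (rsMap R Λ g m) :=
  rfl

lemma locMap_surjective (g : M →ₗ[Λ] M') (hg : Function.Surjective g) :
    Function.Surjective (locMap R S Λ g) :=
  LinearMap.lTensor_surjective (Localization S) (g := rsMap R Λ g) hg

lemma locMap_exact {g : M →ₗ[Λ] M'} {g' : M' →ₗ[Λ] M''} (hgg' : Function.Exact g g') :
    Function.Exact (locMap R S Λ g) (locMap R S Λ g') :=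
  @Module.Flat.lTensor_exact R (Localization S) _ _ _ _ _ _ _ _ _ _ (RestrictScalars.module R Λ M)
    (RestrictScalars.module R Λ M') (RestrictScalars.module R Λ M'') (rsMap R Λ g) (rsMap R Λ g') hgg'

lemma locMod_subsingleton [Subsingleton M] : Subsingleton (LocMod R S Λ M) := by
  haveI : Subsingleton (RestrictScalars R Λ M) := ‹Subsingleton M›
  refine subsingleton_of_forall_eq 0 fun x => ?_
  induction x using TensorProduct.induction_on with
  | zero => rfl
  | tmul t m =>
      have : (m : RestrictScalars R Λ M) = 0 := Subsingleton.elim _ _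
      rw [this, tmul_zero]
  | add x y hx hy => rw [hx, hy, add_zero]

end Aux2

section Aux3

attribute [local instance] RestrictScalars.moduleOrig

variable (R : Type) [CommRing R] (S : Submonoid R) (Λ : Type) [Ring Λ] [Algebra R Λ]
variable (ι : Type)

/-- The inner `R`-bilinear map underlying `freeToFinsupp`. -/
noncomputable def freeToFinsuppAux :
    Localization S →ₗ[R] (RestrictScalars R Λ (ι →₀ Λ) →ₗ[R] (ι →₀ (Localization S ⊗[R] Λ))) where
  toFun t :=
    { toFun := fun p => p.sum fun j b => Finsupp.single j (t ⊗ₜ[R] b)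
      map_add' := fun p q => by
        refine Finsupp.sum_add_index' (fun j => ?_) (fun j b₁ b₂ => ?_)
        · rw [tmul_zero, Finsupp.single_zero]
        · rw [tmul_add, Finsupp.single_add]
      map_smul' := fun r p => by
        show ((algebraMap R Λ r • p : ι →₀ Λ)).sum (fun j b => Finsupp.single j (t ⊗ₜ[R] b))
            = r • p.sum fun j b => Finsupp.single j (t ⊗ₜ[R] b)
        erw [Finsupp.sum_smul_index' (fun j => by rw [tmul_zero, Finsupp.single_zero])]
        erw [Finsupp.smul_sum]
        refine Finsupp.sum_congr fun j _ => ?_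
        rw [algebraMap_smul, tmul_smul, Finsupp.smul_single]
      }
  map_add' t t' := by
    refine LinearMap.ext fun p => ?_
    show (p.sum fun j b => Finsupp.single j ((t + t') ⊗ₜ[R] b)) = _
    rw [LinearMap.add_apply]
    show _ = (p.sum fun j b => Finsupp.single j (t ⊗ₜ[R] b))
        + (p.sum fun j b => Finsupp.single j (t' ⊗ₜ[R] b))
    erw [← Finsupp.sum_add]
    refine Finsupp.sum_congr fun j _ => ?_
    rw [add_tmul, Finsupp.single_add]
  map_smul' r t := by
    refine LinearMap.ext fun p => ?_
    show (p.sum fun j b => Finsupp.single j ((r • t) ⊗ₜ[R] b)) = _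
    rw [RingHom.id_apply, LinearMap.smul_apply]
    show _ = r • (p.sum fun j b => Finsupp.single j (t ⊗ₜ[R] b))
    erw [Finsupp.smul_sum]
    refine Finsupp.sum_congr fun j _ => ?_
    rw [Finsupp.smul_single, smul_tmul']

/-- The canonical `Localization S ⊗[R] Λ`-linear map from the localization of a free module
to the corresponding free module over the localized algebra. -/
noncomputable def freeToFinsupp :
    LocMod R S Λ (ι →₀ Λ) →ₗ[Localization S ⊗[R] Λ] (ι →₀ (Localization S ⊗[R] Λ)) where
  toFun := TensorProduct.lift (freeToFinsuppAux R S Λ ι)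
  map_add' := map_add _
  map_smul' c x := by
    refine big_map_smul R S Λ (TensorProduct.lift (freeToFinsuppAux R S Λ ι))
      (LinearMap.map_zero _) (LinearMap.map_add _) (fun a b x => ?_) c x
    induction x using TensorProduct.induction_on with
    | zero => rw [smul_zero, map_zero, smul_zero]
    | tmul t p =>
        show TensorProduct.lift (freeToFinsuppAux R S Λ ι)
              ((a ⊗ₜ[R] b : Localization S ⊗[R] Λ) • t ⊗ₜ[R] p)
            = (a ⊗ₜ[R] b : Localization S ⊗[R] Λ) •
              TensorProduct.lift (freeToFinsuppAux R S Λ ι) (t ⊗ₜ[R] p)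
        rw [big_smul_tmul, TensorProduct.lift.tmul, TensorProduct.lift.tmul]
        show ((b • p : ι →₀ Λ)).sum (fun j x => Finsupp.single j ((a * t) ⊗ₜ[R] x))
            = (a ⊗ₜ[R] b : Localization S ⊗[R] Λ) •
              (p.sum fun j x => Finsupp.single j (t ⊗ₜ[R] x))
        erw [Finsupp.sum_smul_index' (fun j => by rw [tmul_zero, Finsupp.single_zero]),
          Finsupp.smul_sum]
        refine Finsupp.sum_congr fun j _ => ?_
        rw [Finsupp.smul_single, smul_eq_mul, smul_eq_mul,
          Algebra.TensorProduct.tmul_mul_tmul]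
    | add x y hx hy =>
        rw [smul_add (a ⊗ₜ[R] b : Localization S ⊗[R] Λ) x y, LinearMap.map_add,
          LinearMap.map_add, hx, hy, smul_add (a ⊗ₜ[R] b : Localization S ⊗[R] Λ)]

lemma freeToFinsupp_tmul (t : Localization S) (p : RestrictScalars R Λ (ι →₀ Λ)) :
    freeToFinsupp R S Λ ι (t ⊗ₜ[R] p)
      = (p : ι →₀ Λ).sum fun j b => Finsupp.single j (t ⊗ₜ[R] b) := rfl

theorem locMod_projective (M : Type) [AddCommGroup M] [Module Λ M]
    [h : Module.Projective Λ M] :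
    Module.Projective (Localization S ⊗[R] Λ) (LocMod R S Λ M) := by
  obtain ⟨sΛ, hs⟩ := Module.projective_def.mp h
  refine Module.Projective.of_split (M := M →₀ (Localization S ⊗[R] Λ))
    ((freeToFinsupp R S Λ M).comp (locMap R S Λ sΛ))
    ((Finsupp.linearCombination (Localization S ⊗[R] Λ)
        (fun m : M => ((1 : Localization S) ⊗ₜ[R] (m : RestrictScalars R Λ M) : LocMod R S Λ M))))
    ?_
  refine LinearMap.ext fun x => ?_
  rw [LinearMap.comp_apply, LinearMap.comp_apply, LinearMap.id_apply]
  induction x using TensorProduct.induction_on with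
  | zero => rw [map_zero, map_zero, map_zero]
  | tmul t m =>
      rw [locMap_tmul]
      have h1 : rsMap R Λ sΛ m = sΛ m := rfl
      erw [h1, freeToFinsupp_tmul, map_finsuppSum]
      have h2 : ∀ (j : M) (b : Λ), Finsupp.linearCombination (Localization S ⊗[R] Λ)
          (fun m : M => ((1 : Localization S) ⊗ₜ[R] (m : RestrictScalars R Λ M) : LocMod R S Λ M))
          (Finsupp.single j (t ⊗ₜ[R] b))
          = t ⊗ₜ[R] (b • (show RestrictScalars R Λ M from j)) := by
        intro j b
        erw [Finsupp.linearCombination_single, big_smul_tmul, mul_one]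
      have h3 := hs m
      rw [Finsupp.linearCombination_apply] at h3
      have h4 : ((sΛ m).sum fun j b => b • (show RestrictScalars R Λ M from j)) = m := h3
      calc ((sΛ m).sum fun j b => Finsupp.linearCombination (Localization S ⊗[R] Λ)
              (fun m : M => ((1 : Localization S) ⊗ₜ[R] (m : RestrictScalars R Λ M) : LocMod R S Λ M))
              (Finsupp.single j (t ⊗ₜ[R] b)))
          = (sΛ m).sum (fun j b => t ⊗ₜ[R] (b • (show RestrictScalars R Λ M from j))) :=
            Finsupp.sum_congr fun j _ => h2 j _
        _ = t ⊗ₜ[R] ((sΛ m).sum fun j b => b • (show RestrictScalars R Λ M from j)) := by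
            rw [Finsupp.sum, Finsupp.sum, TensorProduct.tmul_sum]
        _ = t ⊗ₜ[R] m := by rw [h4]
  | add x y hx hy => rw [map_add, map_add, map_add, hx, hy]

end Aux3

section Aux4

attribute [local instance] RestrictScalars.moduleOrig

variable (R : Type) [CommRing R] (S : Submonoid R) (Λ : Type) [Ring Λ] [Algebra R Λ]

/-- Every element of `Localization S ⊗[R] M` has a common denominator. -/
lemma exists_common_denom (M : Type) [AddCommMonoid M] [Module R M]
    (x : Localization S ⊗[R] M) :
    ∃ (s : S) (m : M), x = Localization.mk 1 s ⊗ₜ[R] m := by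
  induction x using TensorProduct.induction_on with
  | zero => exact ⟨1, 0, by rw [tmul_zero]⟩
  | tmul t m =>
      induction t using Localization.induction_on with
      | H y =>
          refine ⟨y.2, y.1 • m, ?_⟩
          have : Localization.mk y.1 y.2 = y.1 • Localization.mk 1 y.2 := by
            rw [Localization.smul_mk, smul_eq_mul, mul_one]
          rw [this, smul_tmul]
  | add x y hx hy =>
      obtain ⟨s, m, rfl⟩ := hx
      obtain ⟨s', m', rfl⟩ := hy
      refine ⟨s * s', (s' : R) • m + (s : R) • m', ?_⟩
      have e1 : Localization.mk (1 : R) s = (s' : R) • Localization.mk 1 (s * s') := by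
        rw [Localization.smul_mk, smul_eq_mul, mul_one, Localization.mk_eq_mk_iff]
        exact Localization.r_of_eq (by push_cast; ring)
      have e2 : Localization.mk (1 : R) s' = (s : R) • Localization.mk 1 (s * s') := by
        rw [Localization.smul_mk, smul_eq_mul, mul_one, Localization.mk_eq_mk_iff]
        exact Localization.r_of_eq (by push_cast; ring)
      rw [e1, e2, smul_tmul, smul_tmul, ← tmul_add]

variable (N : Type) [AddCommGroup N] [Module Λ N] [Module (Localization S ⊗[R] Λ) N]

/-- The identity, viewed as a map from restricted scalars. -/
def castN : RestrictScalars R Λ N → N := fun n => n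

variable (hc : ∀ (l : Λ) (n : N),
  l • n = ((1 : Localization S) ⊗ₜ[R] l : Localization S ⊗[R] Λ) • n)

include hc in
lemma rs_smul_eq_big (r : R) (n : RestrictScalars R Λ N) :
    castN R Λ N (r • n)
      = ((1 : Localization S) ⊗ₜ[R] algebraMap R Λ r : Localization S ⊗[R] Λ)
        • castN R Λ N n := by
  rw [← hc]
  rfl

/-- The `R`-bilinear map underlying `mu`. -/
noncomputable def muAux : Localization S →ₗ[R] (RestrictScalars R Λ N →ₗ[R] RestrictScalars R Λ N) where
  toFun t :=
    { toFun := fun n => (t ⊗ₜ[R] (1 : Λ) : Localization S ⊗[R] Λ) • castN R Λ N n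
      map_add' := fun n n' => by
        exact smul_add (t ⊗ₜ[R] (1 : Λ) : Localization S ⊗[R] Λ) (castN R Λ N n) (castN R Λ N n')
      map_smul' := fun r n => by
        show (t ⊗ₜ[R] (1 : Λ) : Localization S ⊗[R] Λ) • castN R Λ N (r • n)
            = (algebraMap R Λ r) • ((t ⊗ₜ[R] (1 : Λ) : Localization S ⊗[R] Λ) • castN R Λ N n)
        have e0 : castN R Λ N (r • n) = (algebraMap R Λ r) • castN R Λ N n := rfl
        rw [e0, hc, hc, ← mul_smul, ← mul_smul,
          Algebra.TensorProduct.tmul_mul_tmul, Algebra.TensorProduct.tmul_mul_tmul,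
          one_mul, mul_one, one_mul, mul_one] }
  map_add' t t' := by
    refine LinearMap.ext fun n => ?_
    show ((t + t') ⊗ₜ[R] (1 : Λ) : Localization S ⊗[R] Λ) • castN R Λ N n
        = (t ⊗ₜ[R] (1 : Λ) : Localization S ⊗[R] Λ) • castN R Λ N n
          + (t' ⊗ₜ[R] (1 : Λ) : Localization S ⊗[R] Λ) • castN R Λ N n
    rw [add_tmul, add_smul]
  map_smul' r t := by
    refine LinearMap.ext fun n => ?_
    show ((r • t) ⊗ₜ[R] (1 : Λ) : Localization S ⊗[R] Λ) • castN R Λ N n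
        = (algebraMap R Λ r) • ((t ⊗ₜ[R] (1 : Λ) : Localization S ⊗[R] Λ) • castN R Λ N n)
    rw [hc, ← mul_smul, Algebra.TensorProduct.tmul_mul_tmul, one_mul, mul_one]
    have e : (r • t) ⊗ₜ[R] (1 : Λ) = t ⊗ₜ[R] (algebraMap R Λ r) := by
      rw [smul_tmul, Algebra.algebraMap_eq_smul_one]
    rw [e]

include hc in
lemma muAux_comm (a : Localization S) (b : Λ) (x : LocMod R S Λ N) :
    castN R Λ N (TensorProduct.lift (muAux R S Λ N hc)
        ((a ⊗ₜ[R] b : Localization S ⊗[R] Λ) • x))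
      = (a ⊗ₜ[R] b : Localization S ⊗[R] Λ) •
        castN R Λ N (TensorProduct.lift (muAux R S Λ N hc) x) := by
  induction x using TensorProduct.induction_on with
  | zero =>
      rw [smul_zero, LinearMap.map_zero]
      show (0 : N) = (a ⊗ₜ[R] b : Localization S ⊗[R] Λ) • (0 : N)
      rw [smul_zero]
  | tmul t n =>
      rw [big_smul_tmul, TensorProduct.lift.tmul, TensorProduct.lift.tmul]
      show ((a * t) ⊗ₜ[R] (1 : Λ) : Localization S ⊗[R] Λ) • castN R Λ N (b • n)
          = (a ⊗ₜ[R] b : Localization S ⊗[R] Λ) •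
            ((t ⊗ₜ[R] (1 : Λ) : Localization S ⊗[R] Λ) • castN R Λ N n)
      have e : castN R Λ N (b • n)
          = ((1 : Localization S) ⊗ₜ[R] b : Localization S ⊗[R] Λ) • castN R Λ N n := by
        rw [← hc]; rfl
      rw [e, ← mul_smul, ← mul_smul, Algebra.TensorProduct.tmul_mul_tmul,
        Algebra.TensorProduct.tmul_mul_tmul, one_mul, mul_one, mul_one]
  | add x y hx hy =>
      rw [smul_add (a ⊗ₜ[R] b : Localization S ⊗[R] Λ) x y, LinearMap.map_add,
        LinearMap.map_add]
      show castN R Λ N _ + castN R Λ N _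
          = (a ⊗ₜ[R] b : Localization S ⊗[R] Λ) • (castN R Λ N _ + castN R Λ N _)
      rw [hx, hy, smul_add]

/-- The multiplication map `Localization S ⊗[R] N → N` for a module `N` over the
localized algebra. -/
noncomputable def mu : LocMod R S Λ N →ₗ[Localization S ⊗[R] Λ] N where
  toFun x := castN R Λ N (TensorProduct.lift (muAux R S Λ N hc) x)
  map_add' x y := by
    show castN R Λ N (TensorProduct.lift (muAux R S Λ N hc) (x + y)) = _
    rw [LinearMap.map_add]
    rfl
  map_smul' c x :=
    big_map_smul R S Λ
      (fun x => castN R Λ N (TensorProduct.lift (muAux R S Λ N hc) x))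
      (by
        show castN R Λ N (TensorProduct.lift (muAux R S Λ N hc) 0) = 0
        rw [LinearMap.map_zero]; rfl)
      (fun x y => by
        show castN R Λ N (TensorProduct.lift (muAux R S Λ N hc) (x + y))
            = castN R Λ N (TensorProduct.lift (muAux R S Λ N hc) x)
              + castN R Λ N (TensorProduct.lift (muAux R S Λ N hc) y)
        rw [LinearMap.map_add]; rfl)
      (fun a b x => muAux_comm R S Λ N hc a b x) c x

/-- The identity, viewed as a map into restricted scalars. -/
def icastN : N → RestrictScalars R Λ N := fun n => n

lemma mu_tmul (t : Localization S) (n : RestrictScalars R Λ N) :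
    mu R S Λ N hc (t ⊗ₜ[R] n)
      = (t ⊗ₜ[R] (1 : Λ) : Localization S ⊗[R] Λ) • castN R Λ N n := rfl

lemma mu_surjective : Function.Surjective (mu R S Λ N hc) := by
  intro n
  refine ⟨(1 : Localization S) ⊗ₜ[R] icastN R Λ N n, ?_⟩
  rw [mu_tmul]
  show ((1 : Localization S) ⊗ₜ[R] (1 : Λ) : Localization S ⊗[R] Λ) • n = n
  rw [← Algebra.TensorProduct.one_def, one_smul]

lemma mu_injective_zero (x : LocMod R S Λ N) (hx : mu R S Λ N hc x = 0) : x = 0 := by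
  obtain ⟨s, n, rfl⟩ := exists_common_denom R S (RestrictScalars R Λ N) x
  rw [mu_tmul] at hx
  have h1 : (algebraMap R (Localization S) (s : R) * Localization.mk 1 s : Localization S) = 1 := by
    rw [← Localization.mk_one_eq_algebraMap, Localization.mk_mul, mul_one, one_mul,
      Localization.mk_self]
  have h2 : ((algebraMap R (Localization S) (s : R)) ⊗ₜ[R] (1 : Λ) : Localization S ⊗[R] Λ)
      • ((Localization.mk 1 s ⊗ₜ[R] (1 : Λ) : Localization S ⊗[R] Λ) • castN R Λ N n)
      = castN R Λ N n := by
    rw [← mul_smul, Algebra.TensorProduct.tmul_mul_tmul, h1, mul_one,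
      ← Algebra.TensorProduct.one_def, one_smul]
  rw [hx, smul_zero] at h2
  have h3 : n = (0 : RestrictScalars R Λ N) := h2.symm
  rw [h3, tmul_zero]

end Aux4

/-- If every left module over the `R`-algebra `Λ` has a projective resolution of length at
most `d`, then the same holds for every left module over the localized algebra
`Λ_S = S⁻¹R ⊗_R Λ`. -/
theorem stmt_8 (R : Type) [CommRing R] (S : Submonoid R)
    (Λ : Type) [Ring Λ] [Algebra R Λ] (d : ℕ)
    (h : ∀ (M : Type) [AddCommGroup M] [Module Λ M], HasProjResLE Λ d M) :
    ∀ (N : Type) [AddCommGroup N] [Module ((Localization S) ⊗[R] Λ) N],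
      HasProjResLE ((Localization S) ⊗[R] Λ) d N := by
  intro N _ _
  letI : Module Λ N := Module.compHom N
    (Algebra.TensorProduct.includeRight (R := R) (A := Localization S) (B := Λ)).toRingHom
  have hc : ∀ (l : Λ) (n : N),
      l • n = ((1 : Localization S) ⊗ₜ[R] l : Localization S ⊗[R] Λ) • n :=
    fun l n => rfl
  obtain ⟨P, f, ε, hproj, hsurj, hex0, hex, hvan⟩ := h N
  refine ⟨fun i => ModuleCat.of (Localization S ⊗[R] Λ) (LocMod R S Λ (P i)),
    fun i => ModuleCat.ofHom (locMap R S Λ (f i).hom),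
    ModuleCat.ofHom ((mu R S Λ N hc).comp (locMap R S Λ ε.hom)),
    fun i => locMod_projective R S Λ (P i) (h := hproj i),
    ?_, ?_, fun i => locMap_exact R S Λ (hex i),
    fun i hle => by
      haveI := hvan i hle
      exact locMod_subsingleton R S Λ (M := P (i + 1))⟩
  · exact (mu_surjective R S Λ N hc).comp (locMap_surjective R S Λ ε.hom hsurj)
  · have hflat := locMap_exact R S Λ (g := (f 0).hom) (g' := ε.hom) hex0
    refine fun y => ⟨fun hy => (hflat y).mp (mu_injective_zero R S Λ N hc _ hy), fun hy => ?_⟩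
    have h0 : locMap R S Λ ε.hom y = 0 := (hflat y).mpr hy
    show mu R S Λ N hc (locMap R S Λ ε.hom y) = 0
    rw [h0, LinearMap.map_zero]
end
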